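/- The number a_{2,3}(n) of compositions (c_1,...,c_m) of n with 2·c_{2i-1} > 3·c_{2i} for all i with 2i ≤ m equals the number of compositions of n into parts congruent to 1 or 3 modulo 5. -/

import Mathlib

/-- `l` is a composition of `n`: a list of positive integers summing to `n`. -/
def IsComposition (n : ℕ) (l : List ℕ) : Prop := (∀ x ∈ l, 0 < x) ∧ l.sum = n

/-- The scaled Arndt condition: `s * c_{2i-1} > t * c_{2i}` for each pair
(0-indexed: `s * l[2i] > t * l[2i+1]`). -/
def ArndtCond (s t : ℕ) (l : List ℕ) : Prop :=
  ∀ i : ℕ, 2 * i + 1 < l.length → t * l[2 * i + 1]! < s * l[2 * i]!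

/-- `a_{s,t}(n)`: the number of scaled Arndt compositions of `n`. -/
noncomputable def arndtCount (s t n : ℕ) : ℕ :=
  Nat.card {l : List ℕ // IsComposition n l ∧ ArndtCond s t l}

/-- Number of compositions of `n` with all parts in the set `A`. -/
noncomputable def compCount (A : Set ℕ) (n : ℕ) : ℕ :=
  Nat.card {l : List ℕ // IsComposition n l ∧ ∀ x ∈ l, x ∈ A}

/-!
Splitting off the first part shows that compositions with parts `≡ 1, 3 (mod 5)` satisfy
`b 0 = 1` and `b n = ∑ b (n - k)` over `1 ≤ k ≤ n`, `k ≡ 1, 3 (mod 5)`. Splitting off the first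
pair `(c, d)` of an Arndt composition gives `a n = 1 + ∑ a (n - c - d)` over `3d < 2c`,
`c + d ≤ n`. Lowering `c` by one maps the pairs with `2c - 3d > 2` onto the pairs for `n - 1`,
and the remaining boundary pairs, `2c - 3d ∈ {1, 2}`, are determined by their sums `c + d`, which
are exactly the `m ≥ 3` with `m ≡ 1, 3 (mod 5)`. So `a n = a (n - 1) + ∑ a (n - m)` over these
`m`: the same recurrence as `b`.
-/

open Finset

instance (n : ℕ) (P : List ℕ → Prop) : Finite {l : List ℕ // IsComposition n l ∧ P l} :=
  Finite.of_injective (fun l => (⟨l.1, fun hi => l.2.1.1 _ hi, l.2.1.2⟩ : Composition n))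
    fun _ _ h => Subtype.ext (congrArg Composition.blocks h)

lemma isComposition_cons_iff {n k : ℕ} {l : List ℕ} :
    IsComposition n (k :: l) ↔ 0 < k ∧ k ≤ n ∧ IsComposition (n - k) l := by
  simp only [IsComposition, List.mem_cons, forall_eq_or_imp, List.sum_cons]
  constructor
  · rintro ⟨⟨hk, hl⟩, hs⟩
    exact ⟨hk, by omega, hl, by omega⟩
  · rintro ⟨hk, hkn, hl, hs⟩
    exact ⟨⟨hk, hl⟩, by omega⟩

lemma isComposition_zero_iff {l : List ℕ} : IsComposition 0 l ↔ l = [] := by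
  cases l with
  | nil => simp [IsComposition]
  | cons k l => simp only [isComposition_cons_iff, reduceCtorEq, iff_false]; omega

lemma card_composition_zero {P : List ℕ → Prop} (hP : P []) :
    Nat.card {l : List ℕ // IsComposition 0 l ∧ P l} = 1 :=
  Nat.card_eq_one_iff_exists.2 ⟨⟨[], isComposition_zero_iff.2 rfl, hP⟩,
    fun l => Subtype.ext (isComposition_zero_iff.1 l.2.1)⟩

lemma card_composition_eq_sum {n : ℕ} (hn : n ≠ 0) (P : List ℕ → Prop) :
    Nat.card {l : List ℕ // IsComposition n l ∧ P l} =
      ∑ k ∈ Icc 1 n, Nat.card {l : List ℕ // IsComposition (n - k) l ∧ P (k :: l)} := by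
  let cons (x : Σ k : Icc 1 n, {l : List ℕ // IsComposition (n - k) l ∧ P (k :: l)}) :
      {l : List ℕ // IsComposition n l ∧ P l} :=
    ⟨x.1 :: x.2.1, isComposition_cons_iff.2 ⟨(mem_Icc.1 x.1.2).1, (mem_Icc.1 x.1.2).2, x.2.2.1⟩,
      x.2.2.2⟩
  have hcons : Function.Bijective cons := by
    constructor
    · rintro ⟨⟨k, hk⟩, l, hl⟩ ⟨⟨k', hk'⟩, l', hl'⟩ h
      obtain ⟨rfl, rfl⟩ : k = k' ∧ l = l' := by simpa [cons] using h
      rfl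
    · rintro ⟨_ | ⟨k, l⟩, hl, hP⟩
      · exact (hn hl.2.symm).elim
      · obtain ⟨hk, hkn, hl⟩ := isComposition_cons_iff.1 hl
        exact ⟨⟨⟨k, mem_Icc.2 ⟨hk, hkn⟩⟩, l, hl, hP⟩, rfl⟩
  rw [← Nat.card_congr (Equiv.ofBijective cons hcons), Nat.card_sigma]
  exact sum_coe_sort (Icc 1 n) fun k =>
    Nat.card {l : List ℕ // IsComposition (n - k) l ∧ P (k :: l)}

lemma compCount_eq_sum (A : Set ℕ) [DecidablePred (· ∈ A)] {n : ℕ} (hn : n ≠ 0) :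
    compCount A n = ∑ k ∈ Icc 1 n with k ∈ A, compCount A (n - k) := by
  rw [compCount, card_composition_eq_sum hn, sum_filter]
  refine sum_congr rfl fun k _ => ?_
  simp only [List.forall_mem_cons]
  split_ifs with hk <;> simp [hk, compCount]

lemma arndtCond_nil (s t : ℕ) : ArndtCond s t [] := by
  simp [ArndtCond]

lemma arndtCond_singleton (s t c : ℕ) : ArndtCond s t [c] := by
  simp [ArndtCond]

lemma arndtCond_cons_cons {s t c d : ℕ} {l : List ℕ} :
    ArndtCond s t (c :: d :: l) ↔ t * d < s * c ∧ ArndtCond s t l := by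
  constructor
  · intro h
    refine ⟨by simpa using h 0 (by simp), fun i hi => ?_⟩
    simpa [Nat.mul_succ] using h (i + 1) (by simp; omega)
  · rintro ⟨h0, h⟩ (_ | i) hi
    · simpa using h0
    · simpa [Nat.mul_succ] using h i (by simp at hi; omega)

def arndtPairs (s t n : ℕ) : Finset (ℕ × ℕ) :=
  {p ∈ Icc 1 n ×ˢ Icc 1 n | t * p.2 < s * p.1 ∧ p.1 + p.2 ≤ n}

lemma mem_arndtPairs {s t n : ℕ} {p : ℕ × ℕ} :
    p ∈ arndtPairs s t n ↔ 0 < p.1 ∧ 0 < p.2 ∧ t * p.2 < s * p.1 ∧ p.1 + p.2 ≤ n := by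
  simp only [arndtPairs, mem_filter, mem_product, mem_Icc]
  omega

lemma card_arndtCond_cons (s t c m : ℕ) :
    Nat.card {l : List ℕ // IsComposition m l ∧ ArndtCond s t (c :: l)} =
      (if m = 0 then 1 else 0) + ∑ d ∈ Icc 1 m with t * d < s * c, arndtCount s t (m - d) := by
  rcases eq_or_ne m 0 with rfl | hm
  · simp [card_composition_zero (P := fun l => ArndtCond s t (c :: l)) (arndtCond_singleton s t c)]
  rw [card_composition_eq_sum hm, if_neg hm, zero_add, sum_filter]
  refine sum_congr rfl fun d _ => ?_
  simp only [arndtCond_cons_cons]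
  split_ifs with h <;> simp [h, arndtCount]

lemma arndtCount_eq_one_add_sum (s t n : ℕ) :
    arndtCount s t n = 1 + ∑ p ∈ arndtPairs s t n, arndtCount s t (n - (p.1 + p.2)) := by
  rcases eq_or_ne n 0 with rfl | hn
  · simp [arndtCount, arndtPairs, card_composition_zero (arndtCond_nil s t)]
  rw [arndtCount, card_composition_eq_sum hn]
  simp only [card_arndtCond_cons, sum_add_distrib]
  congr 1
  · rw [sum_boole, Nat.cast_id, card_eq_one]
    exact ⟨n, by ext; simp; omega⟩
  · simp only [Nat.sub_sub]
    refine (sum_finset_product' _ _ _ fun p => ?_).symm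
    simp only [mem_arndtPairs, mem_Icc, mem_filter]
    omega

lemma sum_arndtPairs_two_three_succ {M : Type*} [AddCommMonoid M] (f : ℕ → M) (n : ℕ) :
    ∑ p ∈ arndtPairs 2 3 (n + 1), f (p.1 + p.2) =
      ∑ p ∈ arndtPairs 2 3 n, f (p.1 + p.2 + 1) +
        ∑ m ∈ Icc 2 (n + 1) with m % 5 = 1 ∨ m % 5 = 3, f m := by
  rw [← sum_filter_add_sum_filter_not (arndtPairs 2 3 (n + 1)) fun p => 3 * p.2 + 2 < 2 * p.1]
  congr 1
  · refine sum_nbij' (fun p => (p.1 - 1, p.2)) (fun p => (p.1 + 1, p.2)) ?_ ?_ ?_ ?_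
      fun p hp => congrArg f ?_ <;>
      simp only [mem_filter, mem_arndtPairs, Prod.forall, Prod.mk.injEq, and_true] at * <;> omega
  · -- a boundary pair has `2c - 3d ∈ {1, 2}`, so `d = ⌊2(c + d)/5⌋`
    refine sum_nbij' (fun p => p.1 + p.2) (fun m => (m - 2 * m / 5, 2 * m / 5)) ?_ ?_ ?_ ?_
      fun _ _ => rfl <;>
      simp only [mem_filter, mem_arndtPairs, mem_Icc, Prod.forall, Prod.mk.injEq] <;> omega

lemma arndtCount_two_three_succ (n : ℕ) :
    arndtCount 2 3 (n + 1) =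
      ∑ k ∈ Icc 1 (n + 1) with k % 5 = 1 ∨ k % 5 = 3, arndtCount 2 3 (n + 1 - k) := by
  have hparts : {k ∈ Icc 1 (n + 1) | k % 5 = 1 ∨ k % 5 = 3} =
      insert 1 {k ∈ Icc 2 (n + 1) | k % 5 = 1 ∨ k % 5 = 3} := by
    ext k
    simp only [mem_insert, mem_filter, mem_Icc]
    omega
  rw [arndtCount_eq_one_add_sum,
    sum_arndtPairs_two_three_succ (fun m => arndtCount 2 3 (n + 1 - m)), hparts,
    sum_insert (by simp), Nat.add_sub_cancel, arndtCount_eq_one_add_sum 2 3 n, add_assoc]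
  simp only [Nat.add_sub_add_right]

theorem arndt_2_3_eq (n : ℕ) :
    arndtCount 2 3 n = compCount {x : ℕ | x % 5 = 1 ∨ x % 5 = 3} n := by
  induction n using Nat.strong_induction_on with
  | _ n ih =>
  cases n with
  | zero =>
    rw [arndtCount, compCount, card_composition_zero (arndtCond_nil 2 3),
      card_composition_zero (by simp)]
  | succ n =>
    rw [arndtCount_two_three_succ, compCount_eq_sum _ n.succ_ne_zero]
    refine sum_congr (by ext; simp) fun k hk => ih _ ?_
    simp only [mem_filter, mem_Icc] at hk
    omega
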